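/- If aᵢσ_{n−2;i}(a) takes the same value for all i ∈ {1,…,n}, where a = (a₁,…,aₙ) with all aᵢ > 0 and n ≥ 2, then a₁ = a₂ = ⋯ = aₙ. -/

import Mathlib

/-! Comparing the two splittings `σ_{n-1} = ∏_{j ≠ i} a_j + a_i σ_{n-2;i}` for indices `i` and `j`,
the hypothesis forces `∏_{k ≠ i} a_k = ∏_{k ≠ j} a_k`; multiplying back the missing factor gives
`∏ a / a_i = ∏ a / a_j`, hence `a_i = a_j`. -/

/-- The `k`-th elementary symmetric polynomial of `a` over the index set `s`. -/
def esym {n : ℕ} (s : Finset (Fin n)) (k : ℕ) (a : Fin n → ℝ) : ℝ :=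
  ∑ t ∈ Finset.powersetCard k s, ∏ i ∈ t, a i

theorem Multiset.esymm_cons_succ {R : Type*} [CommSemiring R] (x : R) (m : Multiset R) (k : ℕ) :
    (x ::ₘ m).esymm (k + 1) = m.esymm (k + 1) + x * m.esymm k := by
  simp [Multiset.esymm, Multiset.powersetCard_cons, Multiset.sum_map_mul_left]

section esym

variable {n : ℕ} (a : Fin n → ℝ)

theorem esym_eq_esymm (s : Finset (Fin n)) (k : ℕ) : esym s k a = (s.val.map a).esymm k :=
  (Finset.esymm_map_val a s k).symm

theorem esym_card (s : Finset (Fin n)) : esym s s.card a = ∏ i ∈ s, a i := by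
  simp [esym, Finset.powersetCard_self]

theorem esym_insert_succ {s : Finset (Fin n)} {i : Fin n} (hi : i ∉ s) (k : ℕ) :
    esym (insert i s) (k + 1) a = esym s (k + 1) a + a i * esym s k a := by
  simp only [esym_eq_esymm, Finset.insert_val_of_notMem hi, Multiset.map_cons,
    Multiset.esymm_cons_succ]

theorem esym_univ_eq_prod_erase_add (hn : 2 ≤ n) (i : Fin n) :
    esym Finset.univ (n - 1) a
      = ∏ j ∈ Finset.univ.erase i, a j + a i * esym (Finset.univ.erase i) (n - 2) a := by
  have hcard : (Finset.univ.erase i).card = n - 2 + 1 := by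
    rw [Finset.card_erase_of_mem (Finset.mem_univ i), Finset.card_univ, Fintype.card_fin]
    omega
  rw [← Finset.insert_erase (Finset.mem_univ i), show n - 1 = n - 2 + 1 by omega,
    esym_insert_succ a (Finset.notMem_erase i _), ← hcard, esym_card,
    Finset.insert_erase (Finset.mem_univ i)]

end esym

theorem constant_a_sigma_implies_equal {n : ℕ} (hn : 2 ≤ n)
    (a : Fin n → ℝ) (ha : ∀ i, 0 < a i)
    (h : ∀ i j, a i * esym (Finset.univ.erase i) (n - 2) a
        = a j * esym (Finset.univ.erase j) (n - 2) a) :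
    ∀ i j, a i = a j := by
  intro i j
  have hprod : ∏ k ∈ Finset.univ.erase i, a k = ∏ k ∈ Finset.univ.erase j, a k := by
    linarith [esym_univ_eq_prod_erase_add a hn i, esym_univ_eq_prod_erase_add a hn j, h i j]
  have hpos : 0 < ∏ k ∈ Finset.univ.erase i, a k := Finset.prod_pos fun k _ => ha k
  refine mul_left_cancel₀ hpos.ne' ?_
  calc (∏ k ∈ Finset.univ.erase i, a k) * a i = ∏ k, a k :=
        Finset.prod_erase_mul _ _ (Finset.mem_univ i)
    _ = (∏ k ∈ Finset.univ.erase j, a k) * a j :=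
        (Finset.prod_erase_mul _ _ (Finset.mem_univ j)).symm
    _ = (∏ k ∈ Finset.univ.erase i, a k) * a j := by rw [hprod]
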